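/- arXiv:2112.14946 — 3 statements merged into one kernel-verified Lean document; each statement's English description precedes it below -/
import Mathlib

section
/- Consider the partially linear model Y = α + βX + g(S) + ε and exposure model X = h(S) + δ, with g, h measurable fixed functions and ε, δ independent mean-zero errors independent of S and of each other. Define U = (g(S), h(S)). Then U is a measurable function of S, and the potential outcome Y(x) = α + βx + g(S) + ε satisfies Y(x) ⊥ X | U. -/
/-!
Given `U`, the outcome `Y x` is a function of `(U, ε)` and the exposure `X` one of `(U, δ)`,
so it suffices that `σ(U) ⊔ σ(ε)` and `σ(U) ⊔ σ(δ)` are conditionally independent given `σ(U)`.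
These are generated by the π-systems of sets `c ∩ e` with `c ∈ σ(U)`. Because `(ε, δ)` is
independent of `U`, the conditional probability of such a set given `U` is `1_c · P(e)`, and
these factor because `ε` and `δ` are independent: `P(e₁ ∩ e₂) = P(e₁) P(e₂)`.
-/

open MeasureTheory ProbabilityTheory MeasurableSpace Set

theorem IsPiSystem.image2_inter {Ω : Type*} {C D : Set (Set Ω)} (hC : IsPiSystem C)
    (hD : IsPiSystem D) : IsPiSystem (image2 (· ∩ ·) C D) := by
  rintro _ ⟨c₁, hc₁, d₁, hd₁, rfl⟩ _ ⟨c₂, hc₂, d₂, hd₂, rfl⟩ hne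
  rw [inter_inter_inter_comm]
  refine mem_image2_of_mem (hC _ hc₁ _ hc₂ ?_) (hD _ hd₁ _ hd₂ ?_)
  · exact hne.mono fun x hx => ⟨hx.1.1, hx.2.1⟩
  · exact hne.mono fun x hx => ⟨hx.1.2, hx.2.2⟩

theorem MeasurableSpace.sup_eq_generateFrom_image2_inter {Ω : Type*}
    (m₁ m₂ : MeasurableSpace Ω) :
    m₁ ⊔ m₂ =
      generateFrom (image2 (· ∩ ·) {s | MeasurableSet[m₁] s} {s | MeasurableSet[m₂] s}) := by
  refine le_antisymm (sup_le (fun s hs => ?_) (fun s hs => ?_)) (generateFrom_le ?_)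
  · exact measurableSet_generateFrom ⟨s, hs, univ, @MeasurableSet.univ _ m₂, inter_univ s⟩
  · exact measurableSet_generateFrom ⟨univ, @MeasurableSet.univ _ m₁, s, hs, univ_inter s⟩
  · rintro _ ⟨c, hc, d, hd, rfl⟩
    exact (le_sup_left (b := m₂) _ hc).inter (le_sup_right (a := m₁) _ hd)

namespace ProbabilityTheory

variable {Ω : Type*} {m' m₁ m₂ : MeasurableSpace Ω} {mΩ : MeasurableSpace Ω}
  {μ : Measure Ω} [IsFiniteMeasure μ]

theorem condExp_inter_ae_eq_indicator_of_indep (hm' : m' ≤ mΩ) (hm₁ : m₁ ≤ mΩ)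
    (h : Indep m₁ m' μ) {c e : Set Ω} (hc : MeasurableSet[m'] c) (he : MeasurableSet[m₁] e) :
    μ⟦c ∩ e | m'⟧ =ᵐ[μ] c.indicator fun _ => μ.real e := by
  have hce : (c ∩ e).indicator (fun _ => (1 : ℝ)) = c.indicator (e.indicator fun _ => (1 : ℝ)) :=
    (indicator_indicator _ _ _).symm
  have hind : μ⟦e | m'⟧ =ᵐ[μ] fun _ => μ.real e := by
    have := condExp_indep_eq hm₁ hm' (stronglyMeasurable_const (b := (1 : ℝ)).indicator he) h
    rwa [integral_indicator_const _ (hm₁ _ he), smul_eq_mul, mul_one] at this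
  rw [hce]
  filter_upwards [condExp_indicator ((integrable_const (1 : ℝ)).indicator (hm₁ _ he)) hc, hind]
    with ω h₁ h₂
  rw [h₁]
  by_cases hω : ω ∈ c <;> simp [hω, h₂]

theorem condIndep_sup_sup_of_indep [StandardBorelSpace Ω] (hm' : m' ≤ mΩ) (hm₁ : m₁ ≤ mΩ)
    (hm₂ : m₂ ≤ mΩ) (h₁₂ : Indep m₁ m₂ μ) (h : Indep (m₁ ⊔ m₂) m' μ) :
    CondIndep m' (m' ⊔ m₁) (m' ⊔ m₂) hm' μ := by
  have hmeas {m : MeasurableSpace Ω} (hm : m ≤ mΩ) :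
      ∀ s ∈ image2 (· ∩ ·) {s | MeasurableSet[m'] s} {s | MeasurableSet[m] s},
        MeasurableSet[mΩ] s := by
    rintro _ ⟨c, hc, d, hd, rfl⟩
    exact (hm' _ hc).inter (hm _ hd)
  have hpi (m : MeasurableSpace Ω) :
      IsPiSystem (image2 (· ∩ ·) {s | MeasurableSet[m'] s} {s | MeasurableSet[m] s}) :=
    (@isPiSystem_measurableSet Ω m').image2_inter (@isPiSystem_measurableSet Ω m)
  rw [sup_eq_generateFrom_image2_inter m' m₁, sup_eq_generateFrom_image2_inter m' m₂]
  refine CondIndepSets.condIndep' (hmeas hm₁) (hmeas hm₂) (hpi m₁) (hpi m₂) ?_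
  rw [condIndepSets_iff m' hm' _ _ (hmeas hm₁) (hmeas hm₂) μ]
  rintro _ _ ⟨c₁, hc₁, e₁, he₁, rfl⟩ ⟨c₂, hc₂, e₂, he₂, rfl⟩
  have he₁₂ : μ.real (e₁ ∩ e₂) = μ.real e₁ * μ.real e₂ := by
    simp only [measureReal_def, (Indep_iff _ _ μ).1 h₁₂ _ _ he₁ he₂, ENNReal.toReal_mul]
  rw [inter_inter_inter_comm]
  filter_upwards [condExp_inter_ae_eq_indicator_of_indep hm' (sup_le hm₁ hm₂) h (hc₁.inter hc₂)
      ((le_sup_left (b := m₂) _ he₁).inter (le_sup_right (a := m₁) _ he₂)),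
    condExp_inter_ae_eq_indicator_of_indep hm' hm₁ (indep_of_indep_of_le_left h le_sup_left)
      hc₁ he₁,
    condExp_inter_ae_eq_indicator_of_indep hm' hm₂ (indep_of_indep_of_le_left h le_sup_right)
      hc₂ he₂] with ω hω hω₁ hω₂
  rw [hω, Pi.mul_apply, hω₁, hω₂, he₁₂]
  by_cases hc₁ω : ω ∈ c₁ <;> by_cases hc₂ω : ω ∈ c₂ <;> simp [hc₁ω, hc₂ω]

theorem condIndepFun_comp_prodMk_of_indepFun [StandardBorelSpace Ω]
    {γ ε δ β β' : Type*} [MeasurableSpace γ] [MeasurableSpace ε] [MeasurableSpace δ]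
    [MeasurableSpace β] [MeasurableSpace β'] {U : Ω → γ} {E : Ω → ε} {D : Ω → δ}
    (hU : Measurable U) (hE : Measurable E) (hD : Measurable D)
    (hED : IndepFun E D μ) (hEDU : IndepFun (fun ω => (E ω, D ω)) U μ)
    {φ : γ × ε → β} {ψ : γ × δ → β'} (hφ : Measurable φ) (hψ : Measurable ψ) :
    CondIndepFun (MeasurableSpace.comap U inferInstance) hU.comap_le (fun ω => φ (U ω, E ω))
      (fun ω => ψ (U ω, D ω)) μ := by
  have hCI := condIndep_sup_sup_of_indep hU.comap_le hE.comap_le hD.comap_le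
    ((IndepFun_iff_Indep _ _ μ).1 hED)
    (by rw [← comap_prodMk]; exact (IndepFun_iff_Indep _ _ μ).1 hEDU)
  rw [← comap_prodMk, ← comap_prodMk] at hCI
  rw [condIndepFun_iff_condIndep]
  exact condIndep_of_condIndep_of_le_right
    (condIndep_of_condIndep_of_le_left hCI (hφ.comp (comap_measurable _)).comap_le)
    (hψ.comp (comap_measurable _)).comap_le

end ProbabilityTheory

theorem plm_identification_general
    {Ω β : Type*} [MeasurableSpace Ω] [StandardBorelSpace Ω] [MeasurableSpace β]
    (μ : Measure Ω) [IsProbabilityMeasure μ]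
    (S : Ω → β)
    (g h : β → ℝ) (hg : Measurable g) (hh : Measurable h)
    (eps del : Ω → ℝ) (heps : Measurable eps) (hdel : Measurable del)
    (h_indep_errors : IndepFun eps del μ)
    (h_indep_S : IndepFun (fun ω => (eps ω, del ω)) S μ)
    (α b : ℝ)
    (X : Ω → ℝ) (hX : X = fun ω => h (S ω) + del ω)
    (Y : ℝ → Ω → ℝ) (hY : ∀ x, Y x = fun ω => α + b * x + g (S ω) + eps ω)
    (U : Ω → ℝ × ℝ) (hU : U = fun ω => (g (S ω), h (S ω)))
    (hmU : MeasurableSpace.comap U inferInstance ≤ ‹MeasurableSpace Ω›) :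
    (∃ k : β → ℝ × ℝ, Measurable k ∧ U = fun ω => k (S ω)) ∧
      ∀ x : ℝ, CondIndepFun (MeasurableSpace.comap U inferInstance) hmU (Y x) X μ := by
  refine ⟨⟨fun s => (g s, h s), hg.prodMk hh, hU⟩, fun x => ?_⟩
  have hUm : Measurable U := measurable_iff_comap_le.2 hmU
  have hEDU : IndepFun (fun ω => (eps ω, del ω)) U μ :=
    hU ▸ h_indep_S.comp measurable_id (hg.prodMk hh)
  subst hU hX
  rw [hY x]
  exact condIndepFun_comp_prodMk_of_indepFun hUm heps hdel h_indep_errors hEDU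
    (φ := fun p => α + b * x + p.1.1 + p.2) (ψ := fun p => p.1.2 + p.2) (by fun_prop) (by fun_prop)

/-- In the partially linear model `Y = α + βX + g(S) + ε`, `X = h(S) + δ`, with
`ε, δ` mean-zero errors independent of each other and of `S`, and `U = (g(S), h(S))`,
the confounder `U` is a measurable function of `S` and the potential outcome
`Y(x) = α + βx + g(S) + ε` satisfies `Y(x) ⟂ X | U`. -/
theorem plm_identification
    {Ω β : Type*} [MeasurableSpace Ω] [StandardBorelSpace Ω] [MeasurableSpace β]
    (μ : Measure Ω) [IsProbabilityMeasure μ]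
    (S : Ω → β) (hS : Measurable S)
    (g h : β → ℝ) (hg : Measurable g) (hh : Measurable h)
    (eps del : Ω → ℝ) (heps : Measurable eps) (hdel : Measurable del)
    (heps_mean : ∫ ω, eps ω ∂μ = 0) (hdel_mean : ∫ ω, del ω ∂μ = 0)
    (h_indep_errors : IndepFun eps del μ)
    (h_indep_S : IndepFun (fun ω => (eps ω, del ω)) S μ)
    (α b : ℝ)
    (X : Ω → ℝ) (hX : X = fun ω => h (S ω) + del ω)
    (Y : ℝ → Ω → ℝ) (hY : ∀ x, Y x = fun ω => α + b * x + g (S ω) + eps ω)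
    (U : Ω → ℝ × ℝ) (hU : U = fun ω => (g (S ω), h (S ω)))
    (hmU : MeasurableSpace.comap U inferInstance ≤ ‹MeasurableSpace Ω›) :
    (∃ k : β → ℝ × ℝ, Measurable k ∧ U = fun ω => k (S ω)) ∧
      ∀ x : ℝ, CondIndepFun (MeasurableSpace.comap U inferInstance) hmU (Y x) X μ :=
  plm_identification_general μ S g h hg hh eps del heps hdel h_indep_errors h_indep_S α b X hX Y hY
    U hU hmU
end

section
/- In the partially linear data-generating model with X = h(S) + δ where δ has full support on the reals and is independent of S, positivity holds: for any real x and any u in the support of U = (g(S), h(S)), the pair (x, u) is in the support of (X, U). -/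
open MeasureTheory ProbabilityTheory

/-- The (topological) support of a measure: the set of points all of whose neighborhoods
have positive measure.  It is the smallest closed set of full measure (for nice spaces). -/
def measureSupport {α : Type*} [TopologicalSpace α] [MeasurableSpace α]
    (ν : MeasureTheory.Measure α) : Set α :=
  {y | ∀ s ∈ nhds y, 0 < ν s}

/-- In the partially linear data-generating model `X = h(S) + δ`, where `δ` is independent
of `S` and has full support on `ℝ`, positivity holds: for every real `x` and every `u` in
the support of `U = (g(S), h(S))`, the pair `(x, u)` lies in the support of `(X, U)`. -/
theorem plm_positivity
    {Ω β : Type*} [MeasurableSpace Ω] [MeasurableSpace β] [TopologicalSpace β]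
    (μ : Measure Ω) [IsProbabilityMeasure μ]
    (S : Ω → β) (hS : Measurable S)
    (g h : β → ℝ) (hg : Measurable g) (hh : Measurable h)
    (del : Ω → ℝ) (hdel : Measurable del)
    (h_indep : IndepFun del S μ)
    (h_full_support : measureSupport (μ.map del) = Set.univ)
    (X : Ω → ℝ) (hX : X = fun ω => h (S ω) + del ω)
    (U : Ω → ℝ × ℝ) (hU : U = fun ω => (g (S ω), h (S ω))) :
    ∀ x : ℝ, ∀ u ∈ measureSupport (μ.map U),
      (x, u) ∈ measureSupport (μ.map (fun ω => (X ω, U ω))) := by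
  subst hX; subst hU
  intro x u hu s hs
  have hXm : Measurable fun ω => h (S ω) + del ω := (hh.comp hS).add hdel
  have hUm : Measurable fun ω => (g (S ω), h (S ω)) :=
    (hg.comp hS).prodMk (hh.comp hS)
  obtain ⟨ε, hε, hball⟩ := Metric.mem_nhds_iff.mp hs
  have hε2 : 0 < ε / 2 := by linarith
  have h1 : 0 < μ ((fun ω => (g (S ω), h (S ω))) ⁻¹' Metric.ball u (ε / 2)) := by
    have := hu (Metric.ball u (ε / 2)) (Metric.ball_mem_nhds u hε2)
    rwa [Measure.map_apply hUm measurableSet_ball] at this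
  have h2 : 0 < μ (del ⁻¹' Metric.ball (x - u.2) (ε / 2)) := by
    have hmem : (x - u.2) ∈ measureSupport (μ.map del) := by
      rw [h_full_support]; trivial
    have := hmem (Metric.ball (x - u.2) (ε / 2)) (Metric.ball_mem_nhds _ hε2)
    rwa [Measure.map_apply hdel measurableSet_ball] at this
  have hindepU : IndepFun del (fun ω => (g (S ω), h (S ω))) μ :=
    h_indep.comp measurable_id (hg.prodMk hh)
  have hmul : μ (del ⁻¹' Metric.ball (x - u.2) (ε / 2) ∩
      (fun ω => (g (S ω), h (S ω))) ⁻¹' Metric.ball u (ε / 2))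
      = μ (del ⁻¹' Metric.ball (x - u.2) (ε / 2)) *
        μ ((fun ω => (g (S ω), h (S ω))) ⁻¹' Metric.ball u (ε / 2)) :=
    hindepU.measure_inter_preimage_eq_mul _ _ measurableSet_ball measurableSet_ball
  have hsub : del ⁻¹' Metric.ball (x - u.2) (ε / 2) ∩
      (fun ω => (g (S ω), h (S ω))) ⁻¹' Metric.ball u (ε / 2)
      ⊆ (fun ω => (h (S ω) + del ω, (g (S ω), h (S ω)))) ⁻¹' Metric.ball (x, u) ε := by
    rintro ω ⟨hω1, hω2⟩
    have hd : |del ω - (x - u.2)| < ε / 2 := by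
      rw [Set.mem_preimage, Metric.mem_ball, Real.dist_eq] at hω1; exact hω1
    have hUd : dist ((g (S ω), h (S ω)) : ℝ × ℝ) u < ε / 2 := hω2
    have hUd' := hUd
    rw [Prod.dist_eq, max_lt_iff, Real.dist_eq, Real.dist_eq] at hUd'
    have hh2 : |h (S ω) - u.2| < ε / 2 := hUd'.2
    have hdg : |g (S ω) - u.1| < ε / 2 := hUd'.1
    have hX' : |h (S ω) + del ω - x| < ε := by
      have habs := abs_add_le (h (S ω) - u.2) (del ω - (x - u.2))
      have heq : h (S ω) - u.2 + (del ω - (x - u.2)) = h (S ω) + del ω - x := by ring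
      rw [heq] at habs
      linarith
    simp only [Set.mem_preimage, Metric.mem_ball, Prod.dist_eq, max_lt_iff, Real.dist_eq]
    exact ⟨hX', by linarith, by linarith⟩
  have hpos : 0 < μ ((fun ω => (h (S ω) + del ω, (g (S ω), h (S ω)))) ⁻¹' Metric.ball (x, u) ε) :=
    lt_of_lt_of_le (by rw [hmul]; exact ENNReal.mul_pos h2.ne' h1.ne') (measure_mono hsub)
  calc 0 < (μ.map (fun ω => (h (S ω) + del ω, (g (S ω), h (S ω))))) (Metric.ball (x, u) ε) := by
        rwa [Measure.map_apply (hXm.prodMk hUm) measurableSet_ball]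
    _ ≤ _ := measure_mono hball
end

section
/- (Double robustness, propensity model correct) Let f(x|s) be the true conditional density of X given S, strictly positive, and let g(X,S) be any measurable function with appropriate integrability. Then E[ (f(X−δ|S)/f(X|S)) · (Y − g(X,S)) + g(X+δ,S) ] = E[ (f(X−δ|S)/f(X|S)) · Y ]. -/
/-!
Reweighting the law of `(X, S)`, whose density is `f(x | s)`, by `f(x - δ | s) / f(x | s)` gives
the measure with density `f(x - δ | s)`, which by translation invariance of Lebesgue measure is
the law of `(X + δ, S)`. Hence `E[f(X - δ | S) / f(X | S) · g(X, S)] = E[g(X + δ, S)]`, and the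
two `g`-terms on the left cancel.
-/

open MeasureTheory

theorem integral_prod_comp_add_right_fst {G γ E : Type*} [MeasurableSpace G] [AddGroup G]
    [MeasurableAdd G] [MeasurableSpace γ] [NormedAddCommGroup E] [NormedSpace ℝ E]
    (μ : Measure G) [μ.IsAddRightInvariant] [SFinite μ] (ν : Measure γ) [SFinite ν]
    (a : G) (F : G × γ → E) :
    ∫ p, F (p.1 + a, p.2) ∂μ.prod ν = ∫ p, F p ∂μ.prod ν :=
  MeasurePreserving.integral_comp' (f := (MeasurableEquiv.addRight a).prodCongr (.refl γ))
    ((measurePreserving_add_right μ a).prod (.id ν)) F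

theorem integral_withDensity_ofReal {α E : Type*} [MeasurableSpace α] [NormedAddCommGroup E]
    [NormedSpace ℝ E] (μ : Measure α) {h : α → ℝ} (hh : Measurable h) (h_nonneg : ∀ x, 0 ≤ h x)
    (F : α → E) :
    ∫ x, F x ∂μ.withDensity (fun x => ENNReal.ofReal (h x)) = ∫ x, h x • F x ∂μ := by
  rw [integral_withDensity_eq_integral_toReal_smul hh.ennreal_ofReal
    (ae_of_all _ fun _ => ENNReal.ofReal_lt_top)]
  simp only [ENNReal.toReal_ofReal (h_nonneg _)]

theorem integral_shift_ratio_mul_withDensity {G γ : Type*} [MeasurableSpace G] [AddGroup G]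
    [MeasurableAdd G] [MeasurableSpace γ]
    (μ : Measure G) [μ.IsAddRightInvariant] [SFinite μ] (ν : Measure γ) [SFinite ν]
    {h : G × γ → ℝ} (hh : Measurable h) (h_pos : ∀ p, 0 < h p) (a : G) (F : G × γ → ℝ) :
    ∫ p, h (p.1 - a, p.2) / h p * F p ∂(μ.prod ν).withDensity (fun p => ENNReal.ofReal (h p))
      = ∫ p, F (p.1 + a, p.2) ∂(μ.prod ν).withDensity (fun p => ENNReal.ofReal (h p)) := by
  have h_nonneg p := (h_pos p).le
  calc _ = ∫ p, h (p.1 - a, p.2) * F p ∂μ.prod ν := by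
        rw [integral_withDensity_ofReal _ hh h_nonneg]
        congr 1 with p
        rw [smul_eq_mul, ← mul_assoc, mul_div_cancel₀ _ (h_pos p).ne']
    _ = ∫ p, h (p.1 + a - a, p.2) * F (p.1 + a, p.2) ∂μ.prod ν :=
        (integral_prod_comp_add_right_fst μ ν a _).symm
    _ = _ := by simp [integral_withDensity_ofReal _ hh h_nonneg]

theorem doubly_robust_propensity_correct_general
    {Ω γ : Type*} [MeasurableSpace Ω] [MeasurableSpace γ]
    (μ : Measure Ω)
    (ν : Measure γ) [SFinite ν]
    (Y : Ω → ℝ)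
    (X : Ω → ℝ) (hX : Measurable X)
    (S : Ω → γ) (hS : Measurable S)
    (f : ℝ → γ → ℝ) (hf_meas : Measurable (Function.uncurry f))
    (hf_pos : ∀ x s, 0 < f x s)
    -- `f` is the joint (conditional) density of `(X, S)` w.r.t. Lebesgue × base measure
    (hf_density : μ.map (fun ω => (X ω, S ω))
      = ((volume : Measure ℝ).prod ν).withDensity (fun p => ENNReal.ofReal (f p.1 p.2)))
    (δ : ℝ)
    (g : ℝ × γ → ℝ) (hg_meas : Measurable g)
    -- all displayed expectations exist
    (h_int1 : Integrable
      (fun ω => (f (X ω - δ) (S ω) / f (X ω) (S ω)) * (Y ω - g (X ω, S ω))) μ)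
    (h_int2 : Integrable (fun ω => g (X ω + δ, S ω)) μ)
    (h_int3 : Integrable (fun ω => (f (X ω - δ) (S ω) / f (X ω) (S ω)) * Y ω) μ) :
    ∫ ω, ((f (X ω - δ) (S ω) / f (X ω) (S ω)) * (Y ω - g (X ω, S ω))
            + g (X ω + δ, S ω)) ∂μ
      = ∫ ω, (f (X ω - δ) (S ω) / f (X ω) (S ω)) * Y ω ∂μ := by
  have hXS : AEMeasurable (fun ω => (X ω, S ω)) μ := (hX.prodMk hS).aemeasurable
  have h_ratio : Measurable fun p : ℝ × γ => f (p.1 - δ) p.2 / f p.1 p.2 :=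
    (hf_meas.comp ((measurable_fst.sub_const δ).prodMk measurable_snd)).div hf_meas
  have h_shift_g : Measurable fun p : ℝ × γ => g (p.1 + δ, p.2) :=
    hg_meas.comp ((measurable_fst.add_const δ).prodMk measurable_snd)
  have h_reweight : ∫ ω, f (X ω - δ) (S ω) / f (X ω) (S ω) * g (X ω, S ω) ∂μ
      = ∫ ω, g (X ω + δ, S ω) ∂μ := by
    rw [← integral_map hXS (f := fun p => f (p.1 - δ) p.2 / f p.1 p.2 * g p)
        (h_ratio.mul hg_meas).aestronglyMeasurable,
      ← integral_map hXS h_shift_g.aestronglyMeasurable, hf_density]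
    exact integral_shift_ratio_mul_withDensity volume ν hf_meas (fun p => hf_pos p.1 p.2) δ g
  have h_int_wg : Integrable (fun ω => f (X ω - δ) (S ω) / f (X ω) (S ω) * g (X ω, S ω)) μ :=
    (h_int3.sub h_int1).congr (ae_of_all _ fun ω => by simp only [Pi.sub_apply]; ring)
  rw [integral_add h_int1 h_int2, ← h_reweight, ← integral_add h_int1 h_int_wg]
  congr 1 with ω
  ring

/-- Double robustness when the propensity model is correct: if `f(x|s)` is the true
strictly positive conditional density of `X` given `S`, then for any measurable `g`,
`E[(f(X-δ|S)/f(X|S)) · (Y - g(X,S)) + g(X+δ,S)] = E[(f(X-δ|S)/f(X|S)) · Y]`. -/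
theorem doubly_robust_propensity_correct
    {Ω γ : Type*} [MeasurableSpace Ω] [MeasurableSpace γ]
    (μ : Measure Ω) [IsProbabilityMeasure μ]
    (ν : Measure γ) [SFinite ν]
    (Y : Ω → ℝ) (hY : Integrable Y μ)
    (X : Ω → ℝ) (hX : Measurable X)
    (S : Ω → γ) (hS : Measurable S)
    (f : ℝ → γ → ℝ) (hf_meas : Measurable (Function.uncurry f))
    (hf_pos : ∀ x s, 0 < f x s)
    -- `f` is the joint (conditional) density of `(X, S)` w.r.t. Lebesgue × base measure
    (hf_density : μ.map (fun ω => (X ω, S ω))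
      = ((volume : Measure ℝ).prod ν).withDensity (fun p => ENNReal.ofReal (f p.1 p.2)))
    (δ : ℝ)
    (g : ℝ × γ → ℝ) (hg_meas : Measurable g)
    -- all displayed expectations exist
    (h_int1 : Integrable
      (fun ω => (f (X ω - δ) (S ω) / f (X ω) (S ω)) * (Y ω - g (X ω, S ω))) μ)
    (h_int2 : Integrable (fun ω => g (X ω + δ, S ω)) μ)
    (h_int3 : Integrable (fun ω => (f (X ω - δ) (S ω) / f (X ω) (S ω)) * Y ω) μ) :
    ∫ ω, ((f (X ω - δ) (S ω) / f (X ω) (S ω)) * (Y ω - g (X ω, S ω))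
            + g (X ω + δ, S ω)) ∂μ
      = ∫ ω, (f (X ω - δ) (S ω) / f (X ω) (S ω)) * Y ω ∂μ :=
  doubly_robust_propensity_correct_general μ ν Y X hX S hS f hf_meas hf_pos hf_density δ g hg_meas
    h_int1 h_int2 h_int3
end
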